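/- Suppose the price is linear, p(g) = β·g + b with β > 0 and b ≥ 0 (so C(g) = β·g² + b·g and C'(g) = 2β·g + b). Suppose all consumers share a common valuation v that is differentiable, concave and non-decreasing with v' continuous at 0 and v'(0) > b. For each N ≥ 1 let ξ̄_N > 0 satisfy the symmetric Nash-equilibrium condition v'(ξ̄_N) = β(N+1)·ξ̄_N + b, and let μ̄_N > 0 satisfy the symmetric optimality condition v'(μ̄_N) = 2βN·μ̄_N + b. Then the ratio of the Nash-equilibrium total demand to the optimal total demand converges to 2: (N·ξ̄_N)/(N·μ̄_N) = ξ̄_N/μ̄_N → 2 as N → ∞. -/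

import Mathlib

open Set Filter Topology

/-!
Concavity makes `v'` antitone, so `v'(x) ≤ v'(0)` for `x ≥ 0`. Both optimality conditions have the
form `v'(x) - b = a_N x` with `a_N → ∞`, hence `ξ̄_N, μ̄_N → 0`, and dividing them gives
`ξ̄_N / μ̄_N = (v'(ξ̄_N) - b) / (v'(μ̄_N) - b) · 2N / (N + 1) → 1 · 2` by continuity of `v'` at `0`.
-/

theorem ConcaveOn.antitoneOn_of_hasDerivAt {f f' : ℝ → ℝ} {s : Set ℝ} (hf : ConcaveOn ℝ s f)
    (hderiv : ∀ x, HasDerivAt f (f' x) x) : AntitoneOn f' s := by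
  have h := hf.antitoneOn_deriv fun x _ => (hderiv x).differentiableAt
  rwa [funext fun x => (hderiv x).deriv] at h

theorem tendsto_zero_of_nonneg_of_mul_le {α : Type*} {l : Filter α} {a u : α → ℝ} {C : ℝ}
    (ha : Tendsto a l atTop) (hu : ∀ᶠ n in l, 0 ≤ u n) (hC : ∀ᶠ n in l, a n * u n ≤ C) :
    Tendsto u l (𝓝 0) := by
  refine tendsto_of_tendsto_of_tendsto_of_le_of_le' tendsto_const_nhds
    ((tendsto_const_nhds (x := C)).div_atTop ha) hu ?_
  filter_upwards [hC, ha.eventually_gt_atTop 0] with n hn ha_pos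
  rwa [le_div_iff₀ ha_pos, mul_comm]

theorem tendsto_zero_of_eq_mul_add {α : Type*} {l : Filter α} {f : ℝ → ℝ}
    (hf : AntitoneOn f (Ici 0)) {a x : α → ℝ} {b : ℝ} (ha : Tendsto a l atTop)
    (hx : ∀ᶠ n in l, 0 < x n) (heq : ∀ᶠ n in l, f (x n) = a n * x n + b) :
    Tendsto x l (𝓝 0) := by
  refine tendsto_zero_of_nonneg_of_mul_le (C := f 0 - b) ha (hx.mono fun _ h => h.le) ?_
  filter_upwards [hx, heq] with n hxn hn
  have : f (x n) ≤ f 0 := hf self_mem_Ici hxn.le hxn.le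
  linarith

theorem tendsto_two_mul_natCast_div_add_one :
    Tendsto (fun N : ℕ => 2 * (N : ℝ) / ((N : ℝ) + 1)) atTop (𝓝 2) := by
  simpa only [mul_div_assoc, mul_one] using (tendsto_natCast_div_add_atTop (𝕜 := ℝ) 1).const_mul 2

theorem statement_5_general
    (β b : ℝ) (hβ : 0 < β)
    (v v' : ℝ → ℝ)
    (hv_deriv : ∀ x, HasDerivAt v (v' x) x)
    (hv_concave : ConcaveOn ℝ (Ici (0 : ℝ)) v)
    (hv'_cont : ContinuousAt v' 0)
    (hv'0 : b < v' 0)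
    (ξ μ : ℕ → ℝ)
    (hξ_pos : ∀ N : ℕ, 1 ≤ N → 0 < ξ N)
    (hμ_pos : ∀ N : ℕ, 1 ≤ N → 0 < μ N)
    (hξ_eq : ∀ N : ℕ, 1 ≤ N → v' (ξ N) = β * ((N : ℝ) + 1) * ξ N + b)
    (hμ_eq : ∀ N : ℕ, 1 ≤ N → v' (μ N) = 2 * β * (N : ℝ) * μ N + b) :
    Filter.Tendsto (fun N : ℕ => ξ N / μ N) Filter.atTop (nhds 2) := by
  have hanti := hv_concave.antitoneOn_of_hasDerivAt hv_deriv
  have hlarge := eventually_ge_atTop (1 : ℕ)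
  have hξ0 : Tendsto ξ atTop (𝓝 0) := tendsto_zero_of_eq_mul_add hanti
    ((tendsto_natCast_atTop_atTop.atTop_add tendsto_const_nhds).const_mul_atTop hβ)
    (hlarge.mono hξ_pos) (hlarge.mono hξ_eq)
  have hμ0 : Tendsto μ atTop (𝓝 0) := tendsto_zero_of_eq_mul_add hanti
    (tendsto_natCast_atTop_atTop.const_mul_atTop (by positivity)) (hlarge.mono hμ_pos) (hlarge.mono hμ_eq)
  have hmargin (u : ℕ → ℝ) (hu : Tendsto u atTop (𝓝 0)) :
      Tendsto (fun N => v' (u N) - b) atTop (𝓝 (v' 0 - b)) :=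
    (hv'_cont.tendsto.comp hu).sub tendsto_const_nhds
  have hc : v' 0 - b ≠ 0 := (sub_pos.mpr hv'0).ne'
  have hlim := ((hmargin ξ hξ0).div (hmargin μ hμ0) hc).mul tendsto_two_mul_natCast_div_add_one
  rw [div_self hc, one_mul] at hlim
  refine hlim.congr' ?_
  filter_upwards [hlarge] with N hN
  have hN0 : (N : ℝ) ≠ 0 := by positivity
  have := (hμ_pos N hN).ne'
  rw [Pi.div_apply, hξ_eq N hN, hμ_eq N hN]
  field_simp
  ring

/-- With a linear price `p(g) = β·g + b` and a common valuation
`v` with `v'` continuous at `0` and `v'(0) > b`, the symmetric Nash demands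
`ξ̄_N` (solving `v'(ξ̄_N) = β(N+1)ξ̄_N + b`) and symmetric optimal demands
`μ̄_N` (solving `v'(μ̄_N) = 2βN·μ̄_N + b`) satisfy `ξ̄_N/μ̄_N → 2`. -/
theorem statement_5
    (β b : ℝ) (hβ : 0 < β) (hb : 0 ≤ b)
    (v v' : ℝ → ℝ)
    (hv_deriv : ∀ x, HasDerivAt v (v' x) x)
    (hv_concave : ConcaveOn ℝ (Ici (0 : ℝ)) v)
    (hv_mono : MonotoneOn v (Ici (0 : ℝ)))
    (hv0 : v 0 = 0)
    (hv'_cont : ContinuousAt v' 0)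
    (hv'0 : b < v' 0)
    (ξ μ : ℕ → ℝ)
    (hξ_pos : ∀ N : ℕ, 1 ≤ N → 0 < ξ N)
    (hμ_pos : ∀ N : ℕ, 1 ≤ N → 0 < μ N)
    (hξ_eq : ∀ N : ℕ, 1 ≤ N → v' (ξ N) = β * ((N : ℝ) + 1) * ξ N + b)
    (hμ_eq : ∀ N : ℕ, 1 ≤ N → v' (μ N) = 2 * β * (N : ℝ) * μ N + b) :
    Filter.Tendsto (fun N : ℕ => ξ N / μ N) Filter.atTop (nhds 2) :=
  statement_5_general β b hβ v v' hv_deriv hv_concave hv'_cont hv'0 ξ μ hξ_pos hμ_pos hξ_eq hμ_eq
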